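/- arXiv:1304.1616 — 3 statements merged into one kernel-verified Lean document; each statement's English description precedes it below -/
import Mathlib

section
/- Let χ, ψ, β : ℝ³ → ℝ be C¹ functions of the variables (x,u,p). The following are equivalent: (i) for every C² function u : ℝ → ℝ and every x₀ ∈ ℝ, the prolonged curve γ_u(x) = (x, u(x), u'(x)) satisfies (ψ ∘ γ_u)'(x₀) = β(γ_u(x₀)) · (χ ∘ γ_u)'(x₀); (ii) the contact conditions ψ_p = β·χ_p and ψ_x + p·ψ_u = β·(χ_x + p·χ_u) hold at every point (x,u,p) ∈ ℝ³. In other words, (χ,ψ,β) maps prolonged curves to curves on which dU = P dX holds exactly when the contact conditions are satisfied. -/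
/-!
Along the prolonged curve of `u` the chain rule gives `(f ∘ γ_u)' = f_x + u' f_u + u'' f_p`.
At a given point `(x, u, p)` the value of `u''` is still free (a quadratic `u` realises any
second-order jet), so the identity `(ψ ∘ γ_u)' = β (χ ∘ γ_u)'` for all `u` amounts to an affine
identity in `u''`; its slope and intercept are the two contact conditions.
-/

theorem apply_triple_eq_sum (L : ℝ × ℝ × ℝ →L[ℝ] ℝ) (a b c : ℝ) :
    L (a, b, c) = a * L (1, 0, 0) + b * L (0, 1, 0) + c * L (0, 0, 1) := by
  have hdecomp : ((a, b, c) : ℝ × ℝ × ℝ) = a • (1, 0, 0) + b • (0, 1, 0) + c • (0, 0, 1) := by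
    simp
  rw [hdecomp]
  simp only [map_add, map_smul, smul_eq_mul]

theorem forall_apply_one_eq_mul_iff (Lψ Lχ : ℝ × ℝ × ℝ →L[ℝ] ℝ) (b p : ℝ) :
    (∀ q : ℝ, Lψ (1, p, q) = b * Lχ (1, p, q)) ↔
      Lψ (0, 0, 1) = b * Lχ (0, 0, 1) ∧
        Lψ (1, 0, 0) + p * Lψ (0, 1, 0) = b * (Lχ (1, 0, 0) + p * Lχ (0, 1, 0)) := by
  constructor
  · intro h
    have h₀ := h 0
    have h₁ := h 1
    rw [apply_triple_eq_sum Lψ, apply_triple_eq_sum Lχ] at h₀ h₁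
    exact ⟨by linear_combination h₁ - h₀, by linear_combination h₀⟩
  · rintro ⟨hslope, hintercept⟩ q
    rw [apply_triple_eq_sum Lψ, apply_triple_eq_sum Lχ]
    linear_combination hintercept + q * hslope

theorem hasDerivAt_prolongation {u : ℝ → ℝ} {x : ℝ} (hu : DifferentiableAt ℝ u x)
    (hu' : DifferentiableAt ℝ (deriv u) x) :
    HasDerivAt (fun x => (x, u x, deriv u x)) (1, deriv u x, deriv (deriv u) x) x :=
  (hasDerivAt_id x).prodMk (hu.hasDerivAt.prodMk hu'.hasDerivAt)

theorem deriv_comp_prolongation {F : Type*} [NormedAddCommGroup F] [NormedSpace ℝ F]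
    {f : ℝ × ℝ × ℝ → F} {u : ℝ → ℝ} {x : ℝ} (hf : DifferentiableAt ℝ f (x, u x, deriv u x))
    (hu : DifferentiableAt ℝ u x) (hu' : DifferentiableAt ℝ (deriv u) x) :
    deriv (fun x => f (x, u x, deriv u x)) x =
      fderiv ℝ f (x, u x, deriv u x) (1, deriv u x, deriv (deriv u) x) :=
  (hf.hasFDerivAt.comp_hasDerivAt x (hasDerivAt_prolongation hu hu')).deriv

theorem ContDiff.deriv_comp_prolongation {f : ℝ × ℝ × ℝ → ℝ} (hf : ContDiff ℝ 1 f)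
    {u : ℝ → ℝ} (hu : ContDiff ℝ 2 u) (x : ℝ) :
    deriv (fun x => f (x, u x, deriv u x)) x =
      fderiv ℝ f (x, u x, deriv u x) (1, deriv u x, deriv (deriv u) x) :=
  _root_.deriv_comp_prolongation (hf.differentiable one_ne_zero _)
    (hu.differentiable (by norm_num) x) (hu.differentiable_deriv_two x)

theorem exists_contDiff_two_with_jet (x₀ u₀ p₀ q : ℝ) :
    ∃ u : ℝ → ℝ, ContDiff ℝ 2 u ∧ u x₀ = u₀ ∧ deriv u x₀ = p₀ ∧ deriv (deriv u) x₀ = q := by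
  refine ⟨fun x => u₀ + p₀ * (x - x₀) + q / 2 * (x - x₀) ^ 2, by fun_prop, by simp, ?_⟩
  have hderiv : deriv (fun x => u₀ + p₀ * (x - x₀) + q / 2 * (x - x₀) ^ 2) =
      fun x => p₀ + q * (x - x₀) := by
    funext x
    have hshift : HasDerivAt (fun x : ℝ => x - x₀) 1 x := (hasDerivAt_id x).sub_const x₀
    exact (((hshift.const_mul p₀).const_add u₀).add ((hshift.pow 2).const_mul (q / 2))).congr_deriv
      (by push_cast; ring) |>.deriv
  have hderiv₂ : HasDerivAt (fun x => p₀ + q * (x - x₀)) q x₀ := by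
    simpa using (((hasDerivAt_id x₀).sub_const x₀).const_mul q).const_add p₀
  rw [hderiv, hderiv₂.deriv]
  simp

theorem contact_conditions_iff_preserves_contact_general
    (χ ψ β : ℝ × ℝ × ℝ → ℝ)
    (hχ : ContDiff ℝ 1 χ) (hψ : ContDiff ℝ 1 ψ) :
    (∀ u : ℝ → ℝ, ContDiff ℝ 2 u → ∀ x₀ : ℝ,
        deriv (fun x => ψ (x, u x, deriv u x)) x₀ =
          β (x₀, u x₀, deriv u x₀) * deriv (fun x => χ (x, u x, deriv u x)) x₀) ↔
    (∀ z : ℝ × ℝ × ℝ,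
        fderiv ℝ ψ z (0, 0, 1) = β z * fderiv ℝ χ z (0, 0, 1) ∧
        fderiv ℝ ψ z (1, 0, 0) + z.2.2 * fderiv ℝ ψ z (0, 1, 0) =
          β z * (fderiv ℝ χ z (1, 0, 0) + z.2.2 * fderiv ℝ χ z (0, 1, 0))) := by
  constructor
  · rintro h ⟨x₀, u₀, p₀⟩
    rw [← forall_apply_one_eq_mul_iff]
    intro q
    obtain ⟨u, hu, rfl, rfl, rfl⟩ := exists_contDiff_two_with_jet x₀ u₀ p₀ q
    simpa only [hψ.deriv_comp_prolongation hu, hχ.deriv_comp_prolongation hu] using h u hu x₀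
  · intro h u hu x₀
    rw [hψ.deriv_comp_prolongation hu, hχ.deriv_comp_prolongation hu]
    exact (forall_apply_one_eq_mul_iff _ _ _ _).mpr (h _) _

/-- `(χ, ψ, β)` maps prolonged curves `γ_u(x) = (x, u x, u' x)` to curves along which
`dU = P dX` holds (i.e. `(ψ ∘ γ_u)' = β(γ_u) · (χ ∘ γ_u)'`) if and only if the contact
conditions `ψ_p = β χ_p` and `ψ_x + p ψ_u = β (χ_x + p χ_u)` hold at every point. -/
theorem contact_conditions_iff_preserves_contact
    (χ ψ β : ℝ × ℝ × ℝ → ℝ)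
    (hχ : ContDiff ℝ 1 χ) (hψ : ContDiff ℝ 1 ψ) (hβ : ContDiff ℝ 1 β) :
    (∀ u : ℝ → ℝ, ContDiff ℝ 2 u → ∀ x₀ : ℝ,
        deriv (fun x => ψ (x, u x, deriv u x)) x₀ =
          β (x₀, u x₀, deriv u x₀) * deriv (fun x => χ (x, u x, deriv u x)) x₀) ↔
    (∀ z : ℝ × ℝ × ℝ,
        fderiv ℝ ψ z (0, 0, 1) = β z * fderiv ℝ χ z (0, 0, 1) ∧
        fderiv ℝ ψ z (1, 0, 0) + z.2.2 * fderiv ℝ ψ z (0, 1, 0) =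
          β z * (fderiv ℝ χ z (1, 0, 0) + z.2.2 * fderiv ℝ χ z (0, 1, 0))) :=
  contact_conditions_iff_preserves_contact_general χ ψ β hχ hψ
end

section
/- For f : ℝ → ℝ of class C² with nowhere-vanishing derivative and g : ℝ → ℝ of class C¹, let T_{f,g} : ℝ³ → ℝ³ be the map T_{f,g}(x,y,u) = (f(x), f'(x)·y + g(x), u + (f''(x)·y + g'(x))/f'(x)). Then for any two such pairs (f₁,g₁) and (f₂,g₂), the composition satisfies T_{f₂,g₂} ∘ T_{f₁,g₁} = T_{F,G}, where F = f₂ ∘ f₁ and G = (f₂' ∘ f₁)·g₁ + g₂ ∘ f₁ (and F is C² with nowhere-vanishing derivative, G is C¹). Thus these transformations form a pseudo-group. -/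
/-- The pseudo-group transformation `X = f(x)`, `Y = f'(x)·y + g(x)`,
`U = u + (f''(x)·y + g'(x))/f'(x)` on `ℝ³`. -/
noncomputable def pgTransform (f g : ℝ → ℝ) (w : ℝ × ℝ × ℝ) : ℝ × ℝ × ℝ :=
  (f w.1, deriv f w.1 * w.2.1 + g w.1,
    w.2.2 + (deriv (deriv f) w.1 * w.2.1 + deriv g w.1) / deriv f w.1)

/-! `T_{f,g}` at `x` depends only on the 2-jet of `f` and the 1-jet of `g` there, so the
composition law is an algebraic identity between jets, fed by the chain rule for
`(f₂ ∘ f₁)'`, `(f₂ ∘ f₁)''` and `((f₂' ∘ f₁)·g₁ + g₂ ∘ f₁)'`. Since `F' = (f₂' ∘ f₁)·f₁'`,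
the quotient `(F''·y + G')/F'` splits as `(f₁''·y + g₁')/f₁' + (f₂''·Y + g₂')/f₂'` with
`Y = f₁'·y + g₁`, which is where both derivatives must be nonzero. -/

section ChainRule

variable {f₁ g₁ f₂ g₂ : ℝ → ℝ}

theorem deriv_comp_eq_mul (h₁ : Differentiable ℝ f₁) (h₂ : Differentiable ℝ f₂) :
    deriv (f₂ ∘ f₁) = fun x => deriv f₂ (f₁ x) * deriv f₁ x :=
  funext fun x => deriv_comp x (h₂ _) (h₁ x)

theorem deriv_deriv_comp (h₁ : Differentiable ℝ f₁) (h₂ : Differentiable ℝ f₂) {x : ℝ}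
    (h₁' : DifferentiableAt ℝ (deriv f₁) x) (h₂' : DifferentiableAt ℝ (deriv f₂) (f₁ x)) :
    deriv (deriv (f₂ ∘ f₁)) x =
      deriv (deriv f₂) (f₁ x) * deriv f₁ x ^ 2 + deriv f₂ (f₁ x) * deriv (deriv f₁) x := by
  rw [deriv_comp_eq_mul h₁ h₂]
  exact (((h₂'.hasDerivAt.comp x (h₁ x).hasDerivAt).mul h₁'.hasDerivAt).deriv).trans (by rw [Function.comp_apply]; ring)

theorem deriv_deriv_comp_mul_add_comp {x : ℝ} (h₁ : DifferentiableAt ℝ f₁ x)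
    (hg₁ : DifferentiableAt ℝ g₁ x) (h₂' : DifferentiableAt ℝ (deriv f₂) (f₁ x))
    (hg₂ : DifferentiableAt ℝ g₂ (f₁ x)) :
    deriv (fun x => deriv f₂ (f₁ x) * g₁ x + g₂ (f₁ x)) x =
      deriv (deriv f₂) (f₁ x) * deriv f₁ x * g₁ x + deriv f₂ (f₁ x) * deriv g₁ x
        + deriv g₂ (f₁ x) * deriv f₁ x :=
  ((((h₂'.hasDerivAt.comp x h₁.hasDerivAt).mul hg₁.hasDerivAt).add
    (hg₂.hasDerivAt.comp x h₁.hasDerivAt)).deriv).trans (by rw [Function.comp_apply])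

end ChainRule

theorem pgTransform_comp_apply {f₁ g₁ f₂ g₂ F G : ℝ → ℝ} (x y u : ℝ)
    (hf₁' : deriv f₁ x ≠ 0) (hf₂' : deriv f₂ (f₁ x) ≠ 0)
    (hF : F x = f₂ (f₁ x)) (hF' : deriv F x = deriv f₂ (f₁ x) * deriv f₁ x)
    (hF'' : deriv (deriv F) x =
      deriv (deriv f₂) (f₁ x) * deriv f₁ x ^ 2 + deriv f₂ (f₁ x) * deriv (deriv f₁) x)
    (hG : G x = deriv f₂ (f₁ x) * g₁ x + g₂ (f₁ x))
    (hG' : deriv G x =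
      deriv (deriv f₂) (f₁ x) * deriv f₁ x * g₁ x + deriv f₂ (f₁ x) * deriv g₁ x
        + deriv g₂ (f₁ x) * deriv f₁ x) :
    pgTransform f₂ g₂ (pgTransform f₁ g₁ (x, y, u)) = pgTransform F G (x, y, u) := by
  simp only [pgTransform, hF, hF', hF'', hG, hG', Prod.mk.injEq, true_and]
  constructor
  · ring
  · field_simp
    ring

/-- The transformations `T_{f,g}` form a pseudo-group: the composition
`T_{f₂,g₂} ∘ T_{f₁,g₁}` equals `T_{F,G}` with `F = f₂ ∘ f₁` and
`G = (f₂' ∘ f₁)·g₁ + g₂ ∘ f₁`, where `F` is `C²` with nowhere-vanishing derivative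
and `G` is `C¹`. -/
theorem pgTransform_comp
    (f₁ g₁ f₂ g₂ : ℝ → ℝ)
    (hf₁ : ContDiff ℝ 2 f₁) (hf₁' : ∀ x, deriv f₁ x ≠ 0) (hg₁ : ContDiff ℝ 1 g₁)
    (hf₂ : ContDiff ℝ 2 f₂) (hf₂' : ∀ x, deriv f₂ x ≠ 0) (hg₂ : ContDiff ℝ 1 g₂)
    (F G : ℝ → ℝ) (hF : F = f₂ ∘ f₁)
    (hG : ∀ x, G x = deriv f₂ (f₁ x) * g₁ x + g₂ (f₁ x)) :
    (pgTransform f₂ g₂ ∘ pgTransform f₁ g₁ = pgTransform F G) ∧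
    ContDiff ℝ 2 F ∧ (∀ x, deriv F x ≠ 0) ∧ ContDiff ℝ 1 G := by
  obtain rfl : G = fun x => deriv f₂ (f₁ x) * g₁ x + g₂ (f₁ x) := funext hG
  subst hF
  have hd₁ : Differentiable ℝ f₁ := hf₁.differentiable two_ne_zero
  have hd₂ : Differentiable ℝ f₂ := hf₂.differentiable two_ne_zero
  have hF' := deriv_comp_eq_mul hd₁ hd₂
  refine ⟨?_, hf₂.comp hf₁, fun x => hF' ▸ mul_ne_zero (hf₂' _) (hf₁' x), ?_⟩
  · ext1 ⟨x, y, u⟩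
    exact pgTransform_comp_apply x y u (hf₁' x) (hf₂' _) rfl (congrFun hF' x)
      (deriv_deriv_comp hd₁ hd₂ (hf₁.differentiable_deriv_two x)
        (hf₂.differentiable_deriv_two _))
      rfl (deriv_deriv_comp_mul_add_comp (hd₁ x) (hg₁.differentiable one_ne_zero x)
        (hf₂.differentiable_deriv_two _) (hg₂.differentiable one_ne_zero _))
  · have hf₁_one : ContDiff ℝ 1 f₁ := hf₁.of_le one_le_two
    exact (((ContDiff.deriv' (n := 1) hf₂).comp hf₁_one).mul hg₁).add (hg₂.comp hf₁_one)
end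

section
/- Let U ⊆ ℝ³ be open, Φ = (φ, β, α) : U → ℝ³ of class C², let A, B, C, G : ℝ³ → ℝ be C¹ and g : U → ℝ be any function. Define a, b, c : U → ℝ by the three transformation equations a = (A∘Φ)(φ_xβ_y − β_xφ_y) + (B∘Φ)(φ_xα_y − α_xφ_y) + (C∘Φ)(β_xα_y − α_xβ_y), and the analogous equations for b (with (x,z) in place of (x,y)) and c (with (y,z) in place of (x,y)). Assume a(w) ≠ 0 and A(Φ(w)) ≠ 0 for all w ∈ U, and that the vector-field transformation rule G∘Φ = (g/a)·(c·α_x − b·α_y + a·α_z) holds on U. Then the first-order differential invariant I = (g/a)·(∂_z a − ∂_y b + ∂_x c) is preserved: (g/a)·(∂_z a − ∂_y b + ∂_x c) = ((G/A)·(∂₃A − ∂₂B + ∂₁C)) ∘ Φ on U, where ∂₁, ∂₂, ∂₃ are the partial derivatives in the target variables. -/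
/-!
Both sides are multiples of the Jacobian determinant `J = dφ ∧ dβ ∧ dα`. Pullback commutes
with the exterior derivative (the second derivatives of `Φ` cancel by symmetry), so
`a_z - b_y + c_x = ((∂₃A - ∂₂B + ∂₁C) ∘ Φ) · J`; and `Φ*Ω̄ ∧ dα = (A ∘ Φ) · J`, so the
transformation rule reads `G ∘ Φ = (g / a) · (A ∘ Φ) · J`. Dividing by `A ∘ Φ` gives the claim.
-/

variable {E F : Type*} [NormedAddCommGroup E] [NormedSpace ℝ E]
  [NormedAddCommGroup F] [NormedSpace ℝ F]

theorem ContDiffAt.hasFDerivAt_fderiv_apply {f : E → F} {w : E} (hf : ContDiffAt ℝ 2 f w)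
    (u : E) :
    HasFDerivAt (fun x => fderiv ℝ f x u) ((fderiv ℝ (fderiv ℝ f) w).flip u) w := by
  have hd : DifferentiableAt ℝ (fderiv ℝ f) w :=
    (hf.fderiv_right (m := 1) (by norm_num)).differentiableAt one_ne_zero
  simpa using hd.hasFDerivAt.clm_apply (hasFDerivAt_const u w)

noncomputable def fderivWedge (f h : E → ℝ) (x u v : E) : ℝ :=
  fderiv ℝ f x u * fderiv ℝ h x v - fderiv ℝ h x u * fderiv ℝ f x v

theorem hasFDerivAt_fderivWedge {f h : E → ℝ} {w : E} (hf : ContDiffAt ℝ 2 f w)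
    (hh : ContDiffAt ℝ 2 h w) (u v : E) :
    HasFDerivAt (fun x => fderivWedge f h x u v)
      (fderiv ℝ f w u • (fderiv ℝ (fderiv ℝ h) w).flip v
        + fderiv ℝ h w v • (fderiv ℝ (fderiv ℝ f) w).flip u
        - (fderiv ℝ h w u • (fderiv ℝ (fderiv ℝ f) w).flip v
          + fderiv ℝ f w v • (fderiv ℝ (fderiv ℝ h) w).flip u)) w :=
  ((hf.hasFDerivAt_fderiv_apply u).mul (hh.hasFDerivAt_fderiv_apply v)).sub
    ((hh.hasFDerivAt_fderiv_apply u).mul (hf.hasFDerivAt_fderiv_apply v))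

/-- A 2-form on `E` is encoded by its values `ω x u v`; on constant vector fields its exterior
derivative `dω(X, Y, Z)` is this cyclic sum. -/
noncomputable def twoFormExtDeriv (ω : E → E → E → ℝ) (x X Y Z : E) : ℝ :=
  fderiv ℝ (fun y => ω y X Y) x Z - fderiv ℝ (fun y => ω y X Z) x Y
    + fderiv ℝ (fun y => ω y Y Z) x X

/-- `d(df ∧ dh) = 0`. -/
theorem twoFormExtDeriv_fderivWedge {f h : E → ℝ} {w : E} (hf : ContDiffAt ℝ 2 f w)
    (hh : ContDiffAt ℝ 2 h w) (X Y Z : E) :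
    twoFormExtDeriv (fderivWedge f h) w X Y Z = 0 := by
  have hsf := hf.isSymmSndFDerivAt (by simp)
  have hsh := hh.isSymmSndFDerivAt (by simp)
  simp only [twoFormExtDeriv, (hasFDerivAt_fderivWedge hf hh _ _).fderiv,
    sub_apply, add_apply, smul_apply, ContinuousLinearMap.flip_apply, smul_eq_mul]
  rw [hsf Y X, hsf Z X, hsf Z Y, hsh Y X, hsh Z X, hsh Z Y]
  ring

theorem ContinuousLinearMap.apply_triple (L : ℝ × ℝ × ℝ →L[ℝ] ℝ) (x y z : ℝ) :
    L (x, y, z) = L (1, 0, 0) * x + L (0, 1, 0) * y + L (0, 0, 1) * z := by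
  have hp : ((x, y, z) : ℝ × ℝ × ℝ) = x • (1, 0, 0) + y • (0, 1, 0) + z • (0, 0, 1) := by
    simp
  rw [hp, map_add, map_add, map_smul, map_smul, map_smul, smul_eq_mul, smul_eq_mul,
    smul_eq_mul, mul_comm x, mul_comm y, mul_comm z]

theorem fderiv_comp_triple_apply {A : ℝ × ℝ × ℝ → ℝ} {φ β α : E → ℝ} {w : E}
    (hA : DifferentiableAt ℝ A (φ w, β w, α w)) (hφ : DifferentiableAt ℝ φ w)
    (hβ : DifferentiableAt ℝ β w) (hα : DifferentiableAt ℝ α w) (t : E) :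
    fderiv ℝ (fun x => A (φ x, β x, α x)) w t =
      fderiv ℝ A (φ w, β w, α w) (1, 0, 0) * fderiv ℝ φ w t
        + fderiv ℝ A (φ w, β w, α w) (0, 1, 0) * fderiv ℝ β w t
        + fderiv ℝ A (φ w, β w, α w) (0, 0, 1) * fderiv ℝ α w t := by
  have hD : HasFDerivAt (fun x => A (φ x, β x, α x)) _ w :=
    hA.hasFDerivAt.comp w (hφ.hasFDerivAt.prodMk (hβ.hasFDerivAt.prodMk hα.hasFDerivAt))
  rw [hD.fderiv]
  exact ContinuousLinearMap.apply_triple _ _ _ _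

/-- The pullback of `A dx ∧ dy + B dx ∧ dz + C dy ∧ dz` under `(φ, β, α)`. -/
noncomputable def pullbackTwoForm (A B C : ℝ × ℝ × ℝ → ℝ) (φ β α : E → ℝ) (x u v : E) : ℝ :=
  A (φ x, β x, α x) * fderivWedge φ β x u v + B (φ x, β x, α x) * fderivWedge φ α x u v
    + C (φ x, β x, α x) * fderivWedge β α x u v

/-- `(df ∧ dh ∧ dk)(X, Y, Z)`; on the standard basis of `ℝ³` it is the Jacobian determinant. -/
noncomputable def fderivWedge₃ (f h k : E → ℝ) (x X Y Z : E) : ℝ :=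
  fderiv ℝ f x X * fderivWedge h k x Y Z - fderiv ℝ f x Y * fderivWedge h k x X Z
    + fderiv ℝ f x Z * fderivWedge h k x X Y

section Pullback

variable {A B C : ℝ × ℝ × ℝ → ℝ} {φ β α : E → ℝ} {w : E}

theorem fderiv_pullbackTwoForm_apply (hA : DifferentiableAt ℝ A (φ w, β w, α w))
    (hB : DifferentiableAt ℝ B (φ w, β w, α w)) (hC : DifferentiableAt ℝ C (φ w, β w, α w))
    (hφ : ContDiffAt ℝ 2 φ w) (hβ : ContDiffAt ℝ 2 β w) (hα : ContDiffAt ℝ 2 α w)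
    (u v t : E) :
    fderiv ℝ (fun x => pullbackTwoForm A B C φ β α x u v) w t =
      fderiv ℝ (fun x => A (φ x, β x, α x)) w t * fderivWedge φ β w u v
        + A (φ w, β w, α w) * fderiv ℝ (fun x => fderivWedge φ β x u v) w t
      + (fderiv ℝ (fun x => B (φ x, β x, α x)) w t * fderivWedge φ α w u v
        + B (φ w, β w, α w) * fderiv ℝ (fun x => fderivWedge φ α x u v) w t)
      + (fderiv ℝ (fun x => C (φ x, β x, α x)) w t * fderivWedge β α w u v
        + C (φ w, β w, α w) * fderiv ℝ (fun x => fderivWedge β α x u v) w t) := by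
  have hΦ : DifferentiableAt ℝ (fun x => (φ x, β x, α x)) w :=
    (hφ.differentiableAt two_ne_zero).prodMk
      ((hβ.differentiableAt two_ne_zero).prodMk (hα.differentiableAt two_ne_zero))
  have hkA : DifferentiableAt ℝ (fun x => A (φ x, β x, α x)) w := hA.comp w hΦ
  have hkB : DifferentiableAt ℝ (fun x => B (φ x, β x, α x)) w := hB.comp w hΦ
  have hkC : DifferentiableAt ℝ (fun x => C (φ x, β x, α x)) w := hC.comp w hΦ
  have hφβ := (hasFDerivAt_fderivWedge hφ hβ u v).differentiableAt
  have hφα := (hasFDerivAt_fderivWedge hφ hα u v).differentiableAt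
  have hβα := (hasFDerivAt_fderivWedge hβ hα u v).differentiableAt
  simp only [pullbackTwoForm]
  rw [fderiv_fun_add (by fun_prop) (by fun_prop), fderiv_fun_add (by fun_prop) (by fun_prop),
    fderiv_fun_mul hkA hφβ, fderiv_fun_mul hkB hφα, fderiv_fun_mul hkC hβα]
  simp only [add_apply, smul_apply, smul_eq_mul]
  ring

theorem twoFormExtDeriv_pullbackTwoForm (hA : DifferentiableAt ℝ A (φ w, β w, α w))
    (hB : DifferentiableAt ℝ B (φ w, β w, α w)) (hC : DifferentiableAt ℝ C (φ w, β w, α w))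
    (hφ : ContDiffAt ℝ 2 φ w) (hβ : ContDiffAt ℝ 2 β w) (hα : ContDiffAt ℝ 2 α w)
    (X Y Z : E) :
    twoFormExtDeriv (pullbackTwoForm A B C φ β α) w X Y Z =
      (fderiv ℝ A (φ w, β w, α w) (0, 0, 1) - fderiv ℝ B (φ w, β w, α w) (0, 1, 0)
        + fderiv ℝ C (φ w, β w, α w) (1, 0, 0)) * fderivWedge₃ φ β α w X Y Z := by
  have hφβ := twoFormExtDeriv_fderivWedge hφ hβ X Y Z
  have hφα := twoFormExtDeriv_fderivWedge hφ hα X Y Z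
  have hβα := twoFormExtDeriv_fderivWedge hβ hα X Y Z
  have hφ' := hφ.differentiableAt two_ne_zero
  have hβ' := hβ.differentiableAt two_ne_zero
  have hα' := hα.differentiableAt two_ne_zero
  simp only [twoFormExtDeriv, fderiv_pullbackTwoForm_apply hA hB hC hφ hβ hα,
    fderiv_comp_triple_apply hA hφ' hβ' hα', fderiv_comp_triple_apply hB hφ' hβ' hα',
    fderiv_comp_triple_apply hC hφ' hβ' hα'] at hφβ hφα hβα ⊢
  simp only [fderivWedge₃, fderivWedge] at hφβ hφα hβα ⊢
  linear_combination A (φ w, β w, α w) * hφβ + B (φ w, β w, α w) * hφα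
    + C (φ w, β w, α w) * hβα

theorem pullbackTwoForm_wedge_fderiv (x X Y Z : E) :
    pullbackTwoForm A B C φ β α x Y Z * fderiv ℝ α x X
        - pullbackTwoForm A B C φ β α x X Z * fderiv ℝ α x Y
        + pullbackTwoForm A B C φ β α x X Y * fderiv ℝ α x Z =
      A (φ x, β x, α x) * fderivWedge₃ φ β α x X Y Z := by
  simp only [pullbackTwoForm, fderivWedge₃, fderivWedge]
  ring

end Pullback

theorem first_order_invariant_preserved_general
    (U : Set (ℝ × ℝ × ℝ)) (hU : IsOpen U)
    (φ β α : ℝ × ℝ × ℝ → ℝ)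
    (Φ : ℝ × ℝ × ℝ → ℝ × ℝ × ℝ) (hΦdef : ∀ w, Φ w = (φ w, β w, α w))
    (hΦ : ContDiffOn ℝ 2 Φ U)
    (A B C G : ℝ × ℝ × ℝ → ℝ)
    (hA : ContDiff ℝ 1 A) (hB : ContDiff ℝ 1 B) (hC : ContDiff ℝ 1 C)
    (g : ℝ × ℝ × ℝ → ℝ)
    (a b c : ℝ × ℝ × ℝ → ℝ)
    (ha : ∀ w, a w =
      A (Φ w) * (fderiv ℝ φ w (1,0,0) * fderiv ℝ β w (0,1,0)
        - fderiv ℝ β w (1,0,0) * fderiv ℝ φ w (0,1,0))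
      + B (Φ w) * (fderiv ℝ φ w (1,0,0) * fderiv ℝ α w (0,1,0)
        - fderiv ℝ α w (1,0,0) * fderiv ℝ φ w (0,1,0))
      + C (Φ w) * (fderiv ℝ β w (1,0,0) * fderiv ℝ α w (0,1,0)
        - fderiv ℝ α w (1,0,0) * fderiv ℝ β w (0,1,0)))
    (hb : ∀ w, b w =
      A (Φ w) * (fderiv ℝ φ w (1,0,0) * fderiv ℝ β w (0,0,1)
        - fderiv ℝ β w (1,0,0) * fderiv ℝ φ w (0,0,1))
      + B (Φ w) * (fderiv ℝ φ w (1,0,0) * fderiv ℝ α w (0,0,1)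
        - fderiv ℝ α w (1,0,0) * fderiv ℝ φ w (0,0,1))
      + C (Φ w) * (fderiv ℝ β w (1,0,0) * fderiv ℝ α w (0,0,1)
        - fderiv ℝ α w (1,0,0) * fderiv ℝ β w (0,0,1)))
    (hc : ∀ w, c w =
      A (Φ w) * (fderiv ℝ φ w (0,1,0) * fderiv ℝ β w (0,0,1)
        - fderiv ℝ β w (0,1,0) * fderiv ℝ φ w (0,0,1))
      + B (Φ w) * (fderiv ℝ φ w (0,1,0) * fderiv ℝ α w (0,0,1)
        - fderiv ℝ α w (0,1,0) * fderiv ℝ φ w (0,0,1))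
      + C (Φ w) * (fderiv ℝ β w (0,1,0) * fderiv ℝ α w (0,0,1)
        - fderiv ℝ α w (0,1,0) * fderiv ℝ β w (0,0,1)))
    (hA0 : ∀ w ∈ U, A (Φ w) ≠ 0)
    (hGrule : ∀ w ∈ U, G (Φ w) =
      (g w / a w) * (c w * fderiv ℝ α w (1,0,0) - b w * fderiv ℝ α w (0,1,0)
        + a w * fderiv ℝ α w (0,0,1))) :
    ∀ w ∈ U,
      (g w / a w) *
          (fderiv ℝ a w (0,0,1) - fderiv ℝ b w (0,1,0) + fderiv ℝ c w (1,0,0)) =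
        (G (Φ w) / A (Φ w)) *
          (fderiv ℝ A (Φ w) (0,0,1) - fderiv ℝ B (Φ w) (0,1,0)
            + fderiv ℝ C (Φ w) (1,0,0)) := by
  intro w hw
  have hΦw := hΦ.contDiffAt (hU.mem_nhds hw)
  rw [show Φ = fun x => (φ x, β x, α x) from funext hΦdef] at hΦw
  have hφ : ContDiffAt ℝ 2 φ w := hΦw.fst
  have hβ : ContDiffAt ℝ 2 β w := hΦw.snd.fst
  have hα : ContDiffAt ℝ 2 α w := hΦw.snd.snd
  have ha' : a = fun x => pullbackTwoForm A B C φ β α x (1, 0, 0) (0, 1, 0) :=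
    funext fun x => by rw [ha, hΦdef]; rfl
  have hb' : b = fun x => pullbackTwoForm A B C φ β α x (1, 0, 0) (0, 0, 1) :=
    funext fun x => by rw [hb, hΦdef]; rfl
  have hc' : c = fun x => pullbackTwoForm A B C φ β α x (0, 1, 0) (0, 0, 1) :=
    funext fun x => by rw [hc, hΦdef]; rfl
  have hdΩ : fderiv ℝ a w (0, 0, 1) - fderiv ℝ b w (0, 1, 0) + fderiv ℝ c w (1, 0, 0) =
      twoFormExtDeriv (pullbackTwoForm A B C φ β α) w (1, 0, 0) (0, 1, 0) (0, 0, 1) := by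
    subst ha' hb' hc'; rfl
  have hΩα : c w * fderiv ℝ α w (1, 0, 0) - b w * fderiv ℝ α w (0, 1, 0)
      + a w * fderiv ℝ α w (0, 0, 1) =
        A (φ w, β w, α w) * fderivWedge₃ φ β α w (1, 0, 0) (0, 1, 0) (0, 0, 1) := by
    rw [ha', hb', hc']; exact pullbackTwoForm_wedge_fderiv _ _ _ _
  have hAw : A (φ w, β w, α w) ≠ 0 := hΦdef w ▸ hA0 w hw
  rw [hdΩ, twoFormExtDeriv_pullbackTwoForm (hA.differentiable one_ne_zero _)
    (hB.differentiable one_ne_zero _) (hC.differentiable one_ne_zero _) hφ hβ hα,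
    hGrule w hw, hΩα, hΦdef]
  field_simp

/-- The first-order differential invariant `I = (g/a)·(a_z − b_y + c_x)` of the
simultaneous equivalence problem for a two-form and a vector field on `ℝ³` is
preserved: if `(a,b,c)` is the pullback of `(A,B,C)` under `Φ = (φ,β,α)` and the
vector-field transformation rule `G∘Φ = (g/a)(c·α_x − b·α_y + a·α_z)` holds, then
`(g/a)(∂_z a − ∂_y b + ∂_x c) = ((G/A)(∂₃A − ∂₂B + ∂₁C)) ∘ Φ` on `U`. -/
theorem first_order_invariant_preserved
    (U : Set (ℝ × ℝ × ℝ)) (hU : IsOpen U)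
    (φ β α : ℝ × ℝ × ℝ → ℝ)
    (Φ : ℝ × ℝ × ℝ → ℝ × ℝ × ℝ) (hΦdef : ∀ w, Φ w = (φ w, β w, α w))
    (hΦ : ContDiffOn ℝ 2 Φ U)
    (A B C G : ℝ × ℝ × ℝ → ℝ)
    (hA : ContDiff ℝ 1 A) (hB : ContDiff ℝ 1 B) (hC : ContDiff ℝ 1 C)
    (hG : ContDiff ℝ 1 G)
    (g : ℝ × ℝ × ℝ → ℝ)
    (a b c : ℝ × ℝ × ℝ → ℝ)
    (ha : ∀ w, a w =
      A (Φ w) * (fderiv ℝ φ w (1,0,0) * fderiv ℝ β w (0,1,0)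
        - fderiv ℝ β w (1,0,0) * fderiv ℝ φ w (0,1,0))
      + B (Φ w) * (fderiv ℝ φ w (1,0,0) * fderiv ℝ α w (0,1,0)
        - fderiv ℝ α w (1,0,0) * fderiv ℝ φ w (0,1,0))
      + C (Φ w) * (fderiv ℝ β w (1,0,0) * fderiv ℝ α w (0,1,0)
        - fderiv ℝ α w (1,0,0) * fderiv ℝ β w (0,1,0)))
    (hb : ∀ w, b w =
      A (Φ w) * (fderiv ℝ φ w (1,0,0) * fderiv ℝ β w (0,0,1)
        - fderiv ℝ β w (1,0,0) * fderiv ℝ φ w (0,0,1))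
      + B (Φ w) * (fderiv ℝ φ w (1,0,0) * fderiv ℝ α w (0,0,1)
        - fderiv ℝ α w (1,0,0) * fderiv ℝ φ w (0,0,1))
      + C (Φ w) * (fderiv ℝ β w (1,0,0) * fderiv ℝ α w (0,0,1)
        - fderiv ℝ α w (1,0,0) * fderiv ℝ β w (0,0,1)))
    (hc : ∀ w, c w =
      A (Φ w) * (fderiv ℝ φ w (0,1,0) * fderiv ℝ β w (0,0,1)
        - fderiv ℝ β w (0,1,0) * fderiv ℝ φ w (0,0,1))
      + B (Φ w) * (fderiv ℝ φ w (0,1,0) * fderiv ℝ α w (0,0,1)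
        - fderiv ℝ α w (0,1,0) * fderiv ℝ φ w (0,0,1))
      + C (Φ w) * (fderiv ℝ β w (0,1,0) * fderiv ℝ α w (0,0,1)
        - fderiv ℝ α w (0,1,0) * fderiv ℝ β w (0,0,1)))
    (ha0 : ∀ w ∈ U, a w ≠ 0) (hA0 : ∀ w ∈ U, A (Φ w) ≠ 0)
    (hGrule : ∀ w ∈ U, G (Φ w) =
      (g w / a w) * (c w * fderiv ℝ α w (1,0,0) - b w * fderiv ℝ α w (0,1,0)
        + a w * fderiv ℝ α w (0,0,1))) :
    ∀ w ∈ U,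
      (g w / a w) *
          (fderiv ℝ a w (0,0,1) - fderiv ℝ b w (0,1,0) + fderiv ℝ c w (1,0,0)) =
        (G (Φ w) / A (Φ w)) *
          (fderiv ℝ A (Φ w) (0,0,1) - fderiv ℝ B (Φ w) (0,1,0)
            + fderiv ℝ C (Φ w) (1,0,0)) :=
  first_order_invariant_preserved_general U hU φ β α Φ hΦdef hΦ A B C G hA hB hC g a b c ha hb hc
    hA0 hGrule
end
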